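/- arXiv:1806.01934 — 2 statements merged into one kernel-verified Lean document; each statement's English description precedes it below -/
import Mathlib

section
/- Fix a > 0 and V_R < V_F with V_F ≤ 0, and take b0 = 0. If b > V_F - V_R, then there exists no steady state (rho_inf, N_inf) of the NNLIF system with connectivity b. -/
open Real Set Filter MeasureTheory Topology

/-- A steady state of the NNLIF system (with `b0 = 0`), with `rho'`, `rho''`
playing the role of the first and second derivatives of the profile `rho`,
and `limm`, `limp` the one-sided limits of `rho'` at `V_R`. -/
structure NNLIFSteadyState (a b VR VF : ℝ) where
  rho : ℝ → ℝ
  Ninf : ℝ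
  rho' : ℝ → ℝ
  rho'' : ℝ → ℝ
  limm : ℝ
  limp : ℝ
  Ninf_pos : 0 < Ninf
  rho_nonneg : ∀ v ≤ VF, 0 ≤ rho v
  rho_cont : ContinuousOn rho (Iic VF)
  rho_int : IntegrableOn rho (Iic VF)
  rho_mass : (∫ v in Iic VF, rho v) = 1
  rho'_def : ∀ v ∈ Iio VR ∪ Ioo VR VF, HasDerivWithinAt rho (rho' v) (Iic VF) v
  rho''_def : ∀ v ∈ Iio VR ∪ Ioo VR VF, HasDerivWithinAt rho' (rho'' v) (Iic VF) v
  rho'_cont : ContinuousOn rho' (Iio VR ∪ Ioo VR VF)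
  rho''_cont : ContinuousOn rho'' (Iio VR ∪ Ioo VR VF)
  rho_VF : rho VF = 0
  rho_bot : Tendsto rho atBot (nhds 0)
  vrho_bot : Tendsto (fun v => v * rho v) atBot (nhds 0)
  rho'_bot : Tendsto rho' atBot (nhds 0)
  vrho'_bot : Tendsto (fun v => v * rho' v) atBot (nhds 0)
  vrho_int : IntegrableOn (fun v => v * rho v) (Iic VF)
  limm_def : Tendsto rho' (nhdsWithin VR (Iio VR)) (nhds limm)
  limp_def : Tendsto rho' (nhdsWithin VR (Ioi VR)) (nhds limp)
  rho'_VF : HasDerivWithinAt rho (rho' VF) (Iic VF) VF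
  Ninf_def : Ninf = -a * rho' VF
  ode : ∀ v ∈ Iio VR ∪ Ioo VR VF, -(rho v) + (-v + b * Ninf) * rho' v = a * rho'' v
  jump : a * (limm - limp) = Ninf

/-! The steady equation says that the flux `J = (-v + b N) ρ - a ρ'` is locally constant. It
vanishes at `-∞`, so `J = 0` below `V_R`, and the jump condition then gives `J = N` on
`(V_R, V_F)`. Integrating `(-v + b N) ρ = J + a ρ'` over `(-∞, V_F]`, with `ρ(V_F) = 0` and unit
mass, yields `b N - ∫ v ρ = N (V_F - V_R)`. For `V_F ≤ 0` the left side is at least `b N`,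
so `b ≤ V_F - V_R`. -/

namespace NNLIFSteadyState

variable {a b VR VF : ℝ} (S : NNLIFSteadyState a b VR VF)

def drift (v : ℝ) : ℝ := (-v + b * S.Ninf) * S.rho v

def flux (v : ℝ) : ℝ := S.drift v - a * S.rho' v

theorem hasDerivAt_rho (hV : VR ≤ VF) {v : ℝ} (hv : v ∈ Iio VR ∪ Ioo VR VF) :
    HasDerivAt S.rho (S.rho' v) v :=
  (S.rho'_def v hv).hasDerivAt <| Iic_mem_nhds <| hv.elim (fun h => lt_of_lt_of_le h hV) (·.2)

theorem hasDerivAt_rho' (hV : VR ≤ VF) {v : ℝ} (hv : v ∈ Iio VR ∪ Ioo VR VF) :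
    HasDerivAt S.rho' (S.rho'' v) v :=
  (S.rho''_def v hv).hasDerivAt <| Iic_mem_nhds <| hv.elim (fun h => lt_of_lt_of_le h hV) (·.2)

theorem hasDerivAt_flux (hV : VR ≤ VF) {v : ℝ} (hv : v ∈ Iio VR ∪ Ioo VR VF) :
    HasDerivAt S.flux 0 v := by
  have hlin : HasDerivAt (fun w : ℝ => -w + b * S.Ninf) (-1) v :=
    (hasDerivAt_neg v).add_const _
  refine ((hlin.mul (S.hasDerivAt_rho hV hv)).sub
    ((S.hasDerivAt_rho' hV hv).const_mul a)).congr_deriv ?_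
  linear_combination S.ode v hv

theorem flux_eq_of_isPreconnected {s : Set ℝ} (hs : IsOpen s) (hs' : IsPreconnected s)
    (hsub : s ⊆ Iio VR ∪ Ioo VR VF) (hV : VR ≤ VF) {x y : ℝ} (hx : x ∈ s) (hy : y ∈ s) :
    S.flux x = S.flux y :=
  hs.is_const_of_deriv_eq_zero hs'
    (fun _ hv => (S.hasDerivAt_flux hV (hsub hv)).differentiableAt.differentiableWithinAt)
    (fun _ hv => (S.hasDerivAt_flux hV (hsub hv)).deriv) hx hy

theorem tendsto_flux_atBot : Tendsto S.flux atBot (𝓝 0) := by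
  have h := ((S.rho_bot.const_mul (b * S.Ninf)).sub S.vrho_bot).sub (S.rho'_bot.const_mul a)
  simp only [mul_zero, sub_zero] at h
  refine h.congr fun v => ?_
  simp only [flux, drift]
  ring

theorem flux_eq_zero (hV : VR ≤ VF) {v : ℝ} (hv : v < VR) : S.flux v = 0 := by
  refine tendsto_nhds_unique (tendsto_const_nhds.congr' ?_) S.tendsto_flux_atBot
  filter_upwards [eventually_lt_atBot VR] with w hw
  exact S.flux_eq_of_isPreconnected isOpen_Iio isPreconnected_Iio subset_union_left hV hv hw

theorem tendsto_flux_nhdsWithin (hV : VR ≤ VF) {s : Set ℝ} (hs : s ⊆ Iic VF) {ℓ : ℝ}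
    (h : Tendsto S.rho' (𝓝[s] VR) (𝓝 ℓ)) :
    Tendsto S.flux (𝓝[s] VR) (𝓝 (S.drift VR - a * ℓ)) := by
  refine Tendsto.sub (Tendsto.mul ?_ ?_) (h.const_mul a)
  · exact ((continuous_neg.add continuous_const).tendsto VR).mono_left nhdsWithin_le_nhds
  · exact (S.rho_cont VR hV).mono_left (nhdsWithin_mono VR hs)

theorem flux_eq_Ninf (hV : VR < VF) {v : ℝ} (hv : v ∈ Ioo VR VF) : S.flux v = S.Ninf := by
  have hleft : S.drift VR - a * S.limm = 0 := by
    refine tendsto_nhds_unique (S.tendsto_flux_nhdsWithin (s := Iio VR) hV.le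
      (fun _ hw => (lt_trans hw hV).le) S.limm_def) (tendsto_const_nhds.congr' ?_)
    filter_upwards [self_mem_nhdsWithin] with w hw
    exact (S.flux_eq_zero hV.le hw).symm
  have : (𝓝[Ioo VR VF] VR).NeBot := left_nhdsWithin_Ioo_neBot hV
  have hright : S.flux v = S.drift VR - a * S.limp := by
    refine tendsto_nhds_unique (tendsto_const_nhds.congr' ?_) (S.tendsto_flux_nhdsWithin hV.le
      (fun w hw => hw.2.le) (S.limp_def.mono_left (nhdsWithin_mono VR Ioo_subset_Ioi_self)))
    filter_upwards [self_mem_nhdsWithin] with w hw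
    exact S.flux_eq_of_isPreconnected isOpen_Ioo isPreconnected_Ioo subset_union_right hV.le hv hw
  linear_combination hright + hleft + S.jump

theorem integrableOn_drift : IntegrableOn S.drift (Iic VF) := by
  refine (S.vrho_int.neg.add (S.rho_int.const_mul (b * S.Ninf))).congr_fun (fun v _ => ?_)
    measurableSet_Iic
  simp only [drift, Pi.add_apply, Pi.neg_apply]
  ring

theorem integral_drift_Iic (hV : VR ≤ VF) : ∫ v in Iic VR, S.drift v = a * S.rho VR := by
  have hderiv : ∀ v ∈ Iio VR, HasDerivAt (fun w => a * S.rho w) (S.drift v) v := by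
    intro v hv
    have h := S.flux_eq_zero hV hv
    unfold flux at h
    exact ((S.hasDerivAt_rho hV (Or.inl hv)).const_mul a).congr_deriv (by linear_combination -h)
  have h := integral_Iic_of_hasDerivAt_of_tendsto
    (((S.rho_cont VR hV).mono (Iic_subset_Iic.2 hV)).const_mul a) hderiv
    (S.integrableOn_drift.mono_set (Iic_subset_Iic.2 hV)) (S.rho_bot.const_mul a)
  rw [h, mul_zero, sub_zero]

theorem integral_drift_Ioc (hV : VR < VF) :
    ∫ v in Ioc VR VF, S.drift v = S.Ninf * (VF - VR) - a * S.rho VR := by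
  have hderiv : ∀ v ∈ Ioo VR VF, HasDerivAt (fun w => a * S.rho w) (S.drift v - S.Ninf) v := by
    intro v hv
    have h := S.flux_eq_Ninf hV hv
    unfold flux at h
    exact ((S.hasDerivAt_rho hV.le (Or.inr hv)).const_mul a).congr_deriv (by linear_combination -h)
  have hint : IntervalIntegrable S.drift volume VR VF :=
    (intervalIntegrable_iff_integrableOn_Ioc_of_le hV.le).2
      (S.integrableOn_drift.mono_set Ioc_subset_Iic_self)
  have h := intervalIntegral.integral_eq_sub_of_hasDerivAt_of_le hV.le
    ((S.rho_cont.mono Icc_subset_Iic_self).const_mul a) hderiv (hint.sub intervalIntegrable_const)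
  rw [intervalIntegral.integral_sub hint intervalIntegrable_const, intervalIntegral.integral_const,
    intervalIntegral.integral_of_le hV.le, S.rho_VF, smul_eq_mul] at h
  linarith

theorem integral_drift (hV : VR < VF) : ∫ v in Iic VF, S.drift v = S.Ninf * (VF - VR) := by
  rw [← Iic_union_Ioc_eq_Iic hV.le, setIntegral_union (Iic_disjoint_Ioc le_rfl) measurableSet_Ioc
    (S.integrableOn_drift.mono_set (Iic_subset_Iic.2 hV.le))
    (S.integrableOn_drift.mono_set Ioc_subset_Iic_self), S.integral_drift_Iic hV.le,
    S.integral_drift_Ioc hV]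
  ring

theorem integral_drift_eq_sub :
    ∫ v in Iic VF, S.drift v = b * S.Ninf - ∫ v in Iic VF, v * S.rho v := by
  rw [← mul_one (b * S.Ninf), ← S.rho_mass, ← integral_const_mul, ← integral_sub
    (S.rho_int.const_mul _) S.vrho_int]
  congr 1 with v
  simp only [drift]
  ring

theorem integral_mul_rho_nonpos (hVF : VF ≤ 0) : ∫ v in Iic VF, v * S.rho v ≤ 0 :=
  setIntegral_nonpos measurableSet_Iic fun v hv =>
    mul_nonpos_of_nonpos_of_nonneg (le_trans hv hVF) (S.rho_nonneg v hv)

end NNLIFSteadyState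

theorem stmt13_general (a b VR VF : ℝ) (hV : VR < VF) (hVF : VF ≤ 0)
    (hb : VF - VR < b) :
    IsEmpty (NNLIFSteadyState a b VR VF) := by
  refine ⟨fun S => ?_⟩
  have hmass : b * S.Ninf - ∫ v in Iic VF, v * S.rho v = S.Ninf * (VF - VR) :=
    S.integral_drift_eq_sub ▸ S.integral_drift hV
  have : b * S.Ninf ≤ (VF - VR) * S.Ninf := by linarith [S.integral_mul_rho_nonpos hVF]
  exact (le_of_mul_le_mul_right this S.Ninf_pos).not_gt hb

/-- if `b > V_F - V_R` and `V_F ≤ 0` (with `b0 = 0`), there is no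
steady state of the NNLIF system with connectivity `b`. -/
theorem stmt13 (a b VR VF : ℝ) (ha : 0 < a) (hV : VR < VF) (hVF : VF ≤ 0)
    (hb : VF - VR < b) :
    IsEmpty (NNLIFSteadyState a b VR VF) :=
  stmt13_general a b VR VF hV hVF hb
end

section
/- Let sigma > 0, I0 ≥ 0 and let s : [0,sigma] -> R satisfy |s(tau) - s(eta)| ≤ I0 (tau - eta) for all 0 ≤ eta ≤ tau ≤ sigma. Then for every tau in (0,sigma]: ∫_0^tau |∂_x G(s(tau),tau,s(eta),eta)| d eta ≤ I0 sqrt(tau) / (2 sqrt(pi)). -/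
open Real Set Filter MeasureTheory Topology

/-- The one-dimensional heat kernel `G(x, τ, ξ, η)`. -/
noncomputable def heatG (x τ ξ η : ℝ) : ℝ :=
  Real.exp (-(x - ξ) ^ 2 / (4 * (τ - η))) / Real.sqrt (4 * Real.pi * (τ - η))

/-- The partial derivative `∂ₓ G` of the heat kernel in its first argument. -/
noncomputable def heatGx (x τ ξ η : ℝ) : ℝ :=
  -((x - ξ) / (2 * (τ - η))) * heatG x τ ξ η

/-- The rescaling factor `α(τ) = (2τ+1)^{-1/2}`. -/
noncomputable def alphafun (τ : ℝ) : ℝ := (Real.sqrt (2 * τ + 1))⁻¹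

/-!
On the free boundary the Lipschitz bound gives `|s τ - s η| / (2 (τ - η)) ≤ I0 / 2`, and the
Gaussian factor of `G` is at most `(4 π (τ - η))^{-1/2}`. Hence the integrand is dominated by
`I0 / (4 √π) · (τ - η)^{-1/2}`, whose integral over `[0, τ]` is `I0 √τ / (2 √π)`.
-/

lemma intervalIntegrable_sub_rpow {r : ℝ} (hr : -1 < r) (a b : ℝ) :
    IntervalIntegrable (fun η => (b - η) ^ r) volume a b := by
  have h := (intervalIntegral.intervalIntegrable_rpow' (a := 0) (b := b - a) hr).comp_sub_left b
  simpa using h.symm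

lemma integral_sub_rpow {r : ℝ} (hr : -1 < r) (τ : ℝ) :
    ∫ η in (0:ℝ)..τ, (τ - η) ^ r = τ ^ (r + 1) / (r + 1) := by
  rw [intervalIntegral.integral_comp_sub_left (fun x => x ^ r), sub_self, sub_zero,
    integral_rpow (Or.inl hr), zero_rpow (by linarith), sub_zero]

lemma heatG_nonneg (x τ ξ η : ℝ) : 0 ≤ heatG x τ ξ η := by
  unfold heatG; positivity

lemma heatG_le_inv_sqrt {x τ ξ η : ℝ} (hητ : η ≤ τ) :
    heatG x τ ξ η ≤ (√(4 * π * (τ - η)))⁻¹ := by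
  rw [heatG, div_eq_mul_inv]
  refine mul_le_of_le_one_left (by positivity) (exp_le_one_iff.mpr ?_)
  exact div_nonpos_of_nonpos_of_nonneg (neg_nonpos.mpr (sq_nonneg _)) (by linarith)

lemma abs_heatGx_le {x τ ξ η L : ℝ} (hητ : η < τ) (h : |x - ξ| ≤ L * (τ - η)) :
    |heatGx x τ ξ η| ≤ L / (4 * √π) * (τ - η) ^ (-(1/2 : ℝ)) := by
  have hd : 0 < τ - η := sub_pos.mpr hητ
  have hfactor : |x - ξ| / (2 * (τ - η)) ≤ L / 2 := by
    rw [div_le_div_iff₀ (by positivity) two_pos]; nlinarith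
  have hsqrt : √(4 * π * (τ - η)) = 2 * √π * (τ - η) ^ (1/2 : ℝ) := by
    rw [mul_assoc, sqrt_mul (by norm_num), sqrt_mul pi_pos.le, sqrt_eq_rpow (τ - η),
      show (4:ℝ) = 2 ^ 2 by norm_num, sqrt_sq two_pos.le, mul_assoc]
  calc |heatGx x τ ξ η| = |x - ξ| / (2 * (τ - η)) * heatG x τ ξ η := by
        rw [heatGx, abs_mul, abs_neg, abs_div, abs_of_pos (by positivity : 0 < 2 * (τ - η)),
          abs_of_nonneg (heatG_nonneg _ _ _ _)]
    _ ≤ L / 2 * (√(4 * π * (τ - η)))⁻¹ :=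
        mul_le_mul hfactor (heatG_le_inv_sqrt hητ.le) (heatG_nonneg _ _ _ _)
          ((by positivity : 0 ≤ |x - ξ| / (2 * (τ - η))).trans hfactor)
    _ = L / (4 * √π) * (τ - η) ^ (-(1/2 : ℝ)) := by
        rw [hsqrt, rpow_neg hd.le]
        have := sqrt_pos.mpr pi_pos
        field_simp
        ring

theorem stmt19_general (σ I0 : ℝ) (hI0 : 0 ≤ I0)
    (s : ℝ → ℝ)
    (hs : ∀ η τ : ℝ, 0 ≤ η → η ≤ τ → τ ≤ σ → |s τ - s η| ≤ I0 * (τ - η)) :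
    ∀ τ ∈ Ioc (0:ℝ) σ,
      (∫ η in (0:ℝ)..τ, |heatGx (s τ) τ (s η) η|) ≤
        I0 * Real.sqrt τ / (2 * Real.sqrt Real.pi) := by
  rintro τ ⟨hτ, hτσ⟩
  set g : ℝ → ℝ := fun η => I0 / (4 * √π) * (τ - η) ^ (-(1/2 : ℝ))
  by_cases hint : IntervalIntegrable (fun η => |heatGx (s τ) τ (s η) η|) volume 0 τ
  swap
  · rw [intervalIntegral.integral_undef hint]
    positivity
  have hbound : ∀ η ∈ Ioo 0 τ, |heatGx (s τ) τ (s η) η| ≤ g η := fun η hη =>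
    abs_heatGx_le hη.2 (hs η τ hη.1.le hη.2.le hτσ)
  have hg : IntervalIntegrable g volume 0 τ :=
    (intervalIntegrable_sub_rpow (by norm_num) 0 τ).const_mul _
  calc (∫ η in (0:ℝ)..τ, |heatGx (s τ) τ (s η) η|) ≤ ∫ η in (0:ℝ)..τ, g η :=
        intervalIntegral.integral_mono_on_of_le_Ioo hτ.le hint hg hbound
    _ = I0 * √τ / (2 * √π) := by
        rw [intervalIntegral.integral_const_mul, integral_sub_rpow (by norm_num),
          show -(1/2 : ℝ) + 1 = 1/2 by norm_num, ← sqrt_eq_rpow]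
        have := sqrt_pos.mpr pi_pos
        field_simp
        ring

/-- estimate on the time integral of `|∂ₓ G|` along a Lipschitz
free boundary. -/
theorem stmt19 (σ I0 : ℝ) (hσ : 0 < σ) (hI0 : 0 ≤ I0)
    (s : ℝ → ℝ)
    (hs : ∀ η τ : ℝ, 0 ≤ η → η ≤ τ → τ ≤ σ → |s τ - s η| ≤ I0 * (τ - η)) :
    ∀ τ ∈ Ioc (0:ℝ) σ,
      (∫ η in (0:ℝ)..τ, |heatGx (s τ) τ (s η) η|) ≤
        I0 * Real.sqrt τ / (2 * Real.sqrt Real.pi) :=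
  stmt19_general σ I0 hI0 s hs
end
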